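/- For every integer q ≥ 3 and every integer r ≥ 1 there exists a spherical bitrade in the Hamming graph H(qr, q) of volume (q!)^r / 2. -/

import Mathlib

open scoped BigOperators

/-- The ball of radius 1 centered at `x` in a graph `G`. -/
def ball1 {V : Type*} (G : SimpleGraph V) (x : V) : Set V := {y | y = x ∨ G.Adj x y}

/-- A perfect one-error-correcting code: the balls of radius 1 centered at the
vertices of `C` partition the vertex set. -/
def IsPerfectCode {V : Type*} (G : SimpleGraph V) (C : Set V) : Prop :=
  ∀ x : V, ∃! c, c ∈ C ∧ c ∈ ball1 G x

/-- A perfect bitrade: a pair of disjoint nonempty vertex sets such that every ball of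
radius 1 contains exactly one vertex of each, or none of either. -/
def IsPerfectBitrade {V : Type*} (G : SimpleGraph V) (T0 T1 : Set V) : Prop :=
  Disjoint T0 T1 ∧ T0.Nonempty ∧ T1.Nonempty ∧
    ∀ x : V,
      ((∃! y, y ∈ T0 ∧ y ∈ ball1 G x) ∧ (∃! y, y ∈ T1 ∧ y ∈ ball1 G x)) ∨
        (∀ y, y ∈ T0 ∪ T1 → y ∉ ball1 G x)

/-- A spherical bitrade: a pair of disjoint nonempty vertex sets such that every sphere of
radius 1 contains exactly one vertex of each, or none of either. -/
def IsSphericalBitrade {V : Type*} (G : SimpleGraph V) (S0 S1 : Set V) : Prop :=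
  Disjoint S0 S1 ∧ S0.Nonempty ∧ S1.Nonempty ∧
    ∀ x : V,
      ((∃! y, y ∈ S0 ∧ G.Adj x y) ∧ (∃! y, y ∈ S1 ∧ G.Adj x y)) ∨
        (∀ y, y ∈ S0 ∪ S1 → ¬ G.Adj x y)

/-- The Hamming graph `H(n,q)`: vertices are `n`-tuples over an alphabet of size `q`,
adjacent iff they differ in exactly one coordinate. -/
def hammingGraph (n q : ℕ) : SimpleGraph (Fin n → Fin q) where
  Adj x y := hammingDist x y = 1
  symm := by constructor; intro x y h; rwa [hammingDist_comm]
  loopless := by constructor; intro x h; simp [hammingDist_self] at h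

/-- `f` is a `μ`-eigenfunction of `G`: `f` is not identically zero and
`μ · f x = ∑_{y ∈ O(x)} f y` for every vertex `x`. -/
def IsEigenfun {V : Type*} (G : SimpleGraph V) (μ : ℝ) (f : V → ℝ) : Prop :=
  f ≠ 0 ∧ ∀ x : V, μ * f x = ∑ᶠ y ∈ G.neighborSet x, f y

/-- The characteristic function of a set of vertices. -/
noncomputable def chi {V : Type*} (C : Set V) : V → ℝ := Set.indicator C 1

/-- The code `C` has minimum (graph) distance exactly `d`. -/
def HasMinDist {V : Type*} (G : SimpleGraph V) (C : Set V) (d : ℕ) : Prop :=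
  (∀ x ∈ C, ∀ y ∈ C, x ≠ y → (d : ℕ∞) ≤ G.edist x y) ∧
    ∃ x ∈ C, ∃ y ∈ C, x ≠ y ∧ G.edist x y = d

/-- The code `C` of `n`-tuples has minimum Hamming distance exactly `d`. -/
def HasMinHDist {n q : ℕ} (C : Set (Fin n → Fin q)) (d : ℕ) : Prop :=
  (∀ x ∈ C, ∀ y ∈ C, x ≠ y → d ≤ hammingDist x y) ∧
    ∃ x ∈ C, ∃ y ∈ C, x ≠ y ∧ hammingDist x y = d

/-- `G` is distance-regular with intersection numbers `p i j k`. -/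
def IsDistRegular {V : Type*} (G : SimpleGraph V) (p : ℕ → ℕ → ℕ → ℕ) : Prop :=
  G.Connected ∧ ∀ (i j k : ℕ) (x y : V), G.edist x y = k →
    {z : V | G.edist x z = i ∧ G.edist z y = j}.ncard = p i j k


/-!
Split the `q * r` coordinates into `r` blocks of size `q`, so that a vertex is an `r`-tuple of
maps `Fin q → Fin q`, and let `S0` (`S1`) consist of the tuples of permutations whose signs
multiply to `1` (to `-1`). A vertex adjacent to such a tuple `σ` differs from it in a single
entry of a single block `k`; there it takes one value twice and misses another, and the only
tuples of permutations adjacent to it are `σ` and `σ` with `σ k` replaced by `σ k * swap i j`,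
whose total signs are opposite. So every sphere of radius one meets `S0` and `S1` once each or
not at all, and `S0` is the kernel of a surjective homomorphism onto `ℤˣ`, hence of index two
in a group of order `(q!)^r`.
-/

open Equiv

theorem hammingDist_eq_one_iff {ι : Type*} [Fintype ι] {β : ι → Type*} [∀ i, DecidableEq (β i)]
    {x y : ∀ i, β i} : hammingDist x y = 1 ↔ ∃ i, x i ≠ y i ∧ ∀ j ≠ i, x j = y j := by
  simp [hammingDist, Finset.card_eq_one_iff_existsUnique, ExistsUnique, not_imp_comm]

theorem Fintype.exists_eq_one_of_sum_eq_one {κ : Type*} [Fintype κ] [DecidableEq κ]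
    {f : κ → ℕ} (h : ∑ k, f k = 1) : ∃ k, f k = 1 ∧ ∀ l ≠ k, f l = 0 := by
  obtain ⟨k, hk⟩ : ∃ k, f k ≠ 0 := by
    by_contra! h0
    simp [h0] at h
  rw [← Finset.add_sum_erase _ _ (Finset.mem_univ k)] at h
  exact ⟨k, by omega, fun l hl =>
    (Finset.sum_eq_zero_iff (s := Finset.univ.erase k)).1 (by omega) l (by simp [hl])⟩

theorem Int.units_eq_or_eq_neg (u s : ℤˣ) : u = s ∨ u = -s := by
  rcases Int.units_eq_one_or u with rfl | rfl <;> rcases Int.units_eq_one_or s with rfl | rfl <;>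
    simp

theorem MonoidHom.two_mul_card_ker {G : Type*} [Group G] {ε : G →* ℤˣ}
    (hε : Function.Surjective ε) : 2 * Nat.card ε.ker = Nat.card G := by
  rw [← ε.ker.card_mul_index, Subgroup.index_ker, MonoidHom.range_eq_top.2 hε,
    Subgroup.card_top, Nat.card_eq_fintype_card (α := ℤˣ), Fintype.card_units_int, mul_comm]

namespace Equiv.Perm

theorem eq_of_forall_ne_apply_eq {α : Type*} {σ τ : Perm α} (i : α) (h : ∀ j ≠ i, σ j = τ j) :
    σ = τ := by
  ext j
  rcases eq_or_ne j i with rfl | hj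
  · by_contra hne
    have hc : τ.symm (σ j) ≠ j := fun hc => hne (τ.symm_apply_eq.1 hc)
    exact hc (σ.injective (by rw [h _ hc, apply_symm_apply]))
  · exact h j hj

variable {α : Type*} [Fintype α] [DecidableEq α]

theorem hammingDist_ne_one (σ τ : Perm α) : hammingDist ⇑σ ⇑τ ≠ 1 := by
  rw [Ne, hammingDist_eq_one_iff]
  rintro ⟨i, hi, h⟩
  exact hi (by rw [eq_of_forall_ne_apply_eq i h])

/-- `g` takes the value `g i = σ j` twice, at `i` and at `j`, and misses `σ i`: a permutation at
distance one from `g` has to repair `g` at `i` (giving `σ`) or at `j` (giving `σ * swap i j`). -/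
theorem exists_swap_of_hammingDist_eq_one {g : α → α} {σ : Perm α} (h : hammingDist g σ = 1) :
    ∃ i j, i ≠ j ∧ ∀ τ : Perm α, hammingDist g τ = 1 ↔ τ = σ ∨ τ = σ * swap i j := by
  obtain ⟨i, hi, hoff⟩ := hammingDist_eq_one_iff.1 h
  set j := σ.symm (g i)
  have hσj : σ j = g i := σ.apply_symm_apply _
  have hji : j ≠ i := fun h => hi (by rw [← hσj, h])
  have hgj : g j = g i := (hoff j hji).trans hσj
  have hoff' : ∀ k ≠ j, g k = (σ * swap i j) k := by
    intro k hk
    rcases eq_or_ne k i with rfl | hki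
    · simp [hσj]
    · simp [swap_apply_of_ne_of_ne hki hk, hoff k hki]
  refine ⟨i, j, hji.symm, fun τ => ⟨fun hτ => ?_, ?_⟩⟩
  · obtain ⟨k, hk, hτoff⟩ := hammingDist_eq_one_iff.1 hτ
    have hk' : k = i ∨ k = j := by
      by_contra! hne
      exact hji (τ.injective (by rw [← hτoff i hne.1.symm, ← hτoff j hne.2.symm, hgj]))
    rcases hk' with rfl | rfl
    · exact Or.inl (eq_of_forall_ne_apply_eq _ fun l hl => (hτoff l hl).symm.trans (hoff l hl))
    · exact Or.inr (eq_of_forall_ne_apply_eq _ fun l hl => (hτoff l hl).symm.trans (hoff' l hl))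
  · rintro (rfl | rfl)
    · exact h
    · refine hammingDist_eq_one_iff.2 ⟨j, ?_, hoff'⟩
      simpa [hgj] using hi

end Equiv.Perm

section PermTuple
open Perm
variable {κ α : Type*} [Fintype κ] [DecidableEq κ] [Fintype α] [DecidableEq α]

theorem exists_swap_of_sum_hammingDist_eq_one {x : κ → α → α} {σ : κ → Perm α}
    (h : ∑ k, hammingDist (x k) ⇑(σ k) = 1) :
    ∃ k i j, i ≠ j ∧ ∀ ρ : κ → Perm α, ∑ k, hammingDist (x k) ⇑(ρ k) = 1 ↔
      ρ = σ ∨ ρ = σ * (Pi.mulSingle k (swap i j) : κ → Perm α) := by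
  obtain ⟨k, hk, hσoff⟩ := Fintype.exists_eq_one_of_sum_eq_one h
  obtain ⟨i, j, hij, hpair⟩ := exists_swap_of_hammingDist_eq_one hk
  have hxσ : ∀ l ≠ k, x l = σ l := fun l hl => hammingDist_eq_zero.1 (hσoff l hl)
  refine ⟨k, i, j, hij, fun ρ => ⟨fun hρ => ?_, ?_⟩⟩
  · obtain ⟨l, hl, hρoff⟩ := Fintype.exists_eq_one_of_sum_eq_one hρ
    have hxρ : ∀ m ≠ l, x m = ρ m := fun m hm => hammingDist_eq_zero.1 (hρoff m hm)
    obtain rfl : l = k := by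
      by_contra hlk
      exact hammingDist_ne_one (ρ k) (σ k) (hxρ k (Ne.symm hlk) ▸ hk)
    have hρσ : ∀ m ≠ l, ρ m = σ m := fun m hm =>
      DFunLike.coe_injective ((hxρ m hm).symm.trans (hxσ m hm))
    rcases (hpair (ρ l)).1 hl with h | h
    · left
      funext m
      rcases eq_or_ne m l with rfl | hm
      exacts [h, hρσ m hm]
    · right
      funext m
      rcases eq_or_ne m l with rfl | hm
      · simpa using h
      · simpa [hm] using hρσ m hm
  · rintro (rfl | rfl)
    · exact h
    · rw [← h]
      refine Finset.sum_congr rfl fun m _ => ?_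
      rcases eq_or_ne m k with rfl | hm
      · simpa [hk] using (hpair _).2 (Or.inr rfl)
      · simp [hm]

variable (κ α) in
def tupleSign : (κ → Perm α) →* ℤˣ := ∏ k, sign.comp (Pi.evalMonoidHom (fun _ => Perm α) k)

theorem tupleSign_mulSingle (k : κ) (s : Perm α) :
    tupleSign κ α (Pi.mulSingle k s) = sign s := by
  simp only [tupleSign, MonoidHom.finsetProd_apply, MonoidHom.comp_apply, Pi.evalMonoidHom_apply]
  simp [Pi.apply_mulSingle (fun _ => (sign : Perm α → ℤˣ)) (fun _ => map_one sign)]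

theorem tupleSign_surjective [Nonempty κ] [Nontrivial α] :
    Function.Surjective (tupleSign κ α) := by
  intro u
  obtain ⟨s, rfl⟩ := sign_surjective (α := α) u
  exact ⟨Pi.mulSingle (Classical.arbitrary κ) s, tupleSign_mulSingle _ _⟩

theorem tupleSign_mul_mulSingle_swap (σ : κ → Perm α) (k : κ) {i j : α} (hij : i ≠ j) :
    tupleSign κ α (σ * (Pi.mulSingle k (swap i j) : κ → Perm α)) = -tupleSign κ α σ := by
  rw [map_mul, tupleSign_mulSingle, sign_swap hij, mul_neg_one]

end PermTuple

section Bitrade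
variable {V P : Type*} (G : SimpleGraph V) {f : P → V} {ε : P → ℤˣ}

theorem existsUnique_adj_image_of_pairing {x : V} {σ τ : P} (hτ : ε τ = -ε σ)
    (hadj : ∀ ρ, G.Adj x (f ρ) ↔ ρ = σ ∨ ρ = τ) (s : ℤˣ) :
    ∃! y, y ∈ f '' {ρ | ε ρ = s} ∧ G.Adj x y := by
  obtain ⟨u, hu, hus, huniq⟩ : ∃ u, G.Adj x (f u) ∧ ε u = s ∧
      ∀ ρ, G.Adj x (f ρ) → ε ρ = s → ρ = u := by
    rcases Int.units_eq_or_eq_neg (ε σ) s with h | h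
    · refine ⟨σ, (hadj σ).2 (Or.inl rfl), h, fun ρ hρ hρs => ((hadj ρ).1 hρ).resolve_right ?_⟩
      rintro rfl
      exact units_ne_neg_self s (hρs.symm.trans (hτ.trans (congrArg Neg.neg h)))
    · refine ⟨τ, (hadj τ).2 (Or.inr rfl), by rw [hτ, h, neg_neg],
        fun ρ hρ hρs => ((hadj ρ).1 hρ).resolve_left ?_⟩
      rintro rfl
      exact units_ne_neg_self s (hρs.symm.trans h)
  refine ⟨f u, ⟨⟨u, hus, rfl⟩, hu⟩, ?_⟩
  rintro _ ⟨⟨ρ, hρs, rfl⟩, hρ⟩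
  rw [huniq ρ hρ hρs]

theorem isSphericalBitrade_image_of_pairing (hf : Function.Injective f)
    (hε : Function.Surjective ε)
    (hpair : ∀ x σ, G.Adj x (f σ) → ∃ τ, ε τ = -ε σ ∧ ∀ ρ, G.Adj x (f ρ) ↔ ρ = σ ∨ ρ = τ) :
    IsSphericalBitrade G (f '' {σ | ε σ = 1}) (f '' {σ | ε σ = -1}) := by
  obtain ⟨σ₀, hσ₀⟩ := hε 1
  obtain ⟨σ₁, hσ₁⟩ := hε (-1)
  refine ⟨(Set.disjoint_image_iff hf).2 (Set.disjoint_left.2 fun σ h1 h2 => ?_),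
    ⟨f σ₀, σ₀, hσ₀, rfl⟩, ⟨f σ₁, σ₁, hσ₁, rfl⟩, fun x => ?_⟩
  · exact units_ne_neg_self (1 : ℤˣ) (h1.symm.trans h2)
  by_cases hx : ∃ σ, G.Adj x (f σ)
  · obtain ⟨σ, hσ⟩ := hx
    obtain ⟨τ, hτ, hadj⟩ := hpair x σ hσ
    exact Or.inl ⟨existsUnique_adj_image_of_pairing G hτ hadj 1,
      existsUnique_adj_image_of_pairing G hτ hadj (-1)⟩
  · right
    rintro _ (⟨σ, -, rfl⟩ | ⟨σ, -, rfl⟩) hadj <;> exact hx ⟨σ, hadj⟩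

end Bitrade

section Blocks
variable {ι κ α β : Type*}

def blockEquiv (e : α × κ ≃ ι) : (ι → β) ≃ (κ → α → β) where
  toFun v k a := v (e (a, k))
  invFun x i := x (e.symm i).2 (e.symm i).1
  left_inv v := by simp
  right_inv x := by simp

theorem hammingDist_eq_sum_blockEquiv [Fintype ι] [Fintype κ] [Fintype α] [DecidableEq β]
    (e : α × κ ≃ ι) (v w : ι → β) :
    hammingDist v w = ∑ k, hammingDist (blockEquiv e v k) (blockEquiv e w k) := by
  simp only [hammingDist, Finset.card_filter]
  rw [← e.sum_comp, Fintype.sum_prod_type_right]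
  rfl

def permVertex (e : α × κ ≃ ι) (σ : κ → Perm α) : ι → α :=
  (blockEquiv e).symm fun k => σ k

theorem hammingDist_permVertex [Fintype ι] [Fintype κ] [Fintype α] [DecidableEq α]
    (e : α × κ ≃ ι) (x : ι → α) (σ : κ → Perm α) :
    hammingDist x (permVertex e σ) = ∑ k, hammingDist (blockEquiv e x k) ⇑(σ k) := by
  rw [hammingDist_eq_sum_blockEquiv e, permVertex, Equiv.apply_symm_apply]

theorem permVertex_injective (e : α × κ ≃ ι) : Function.Injective (permVertex e) :=
  (blockEquiv e).symm.injective.comp fun _ _ h =>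
    funext fun k => DFunLike.coe_injective (congrFun h k)

end Blocks

theorem exists_pairing_of_adj_permVertex {n q : ℕ} {κ : Type*} [Fintype κ] [DecidableEq κ]
    (e : Fin q × κ ≃ Fin n) (x : Fin n → Fin q) (σ : κ → Perm (Fin q))
    (h : (hammingGraph n q).Adj x (permVertex e σ)) :
    ∃ τ, tupleSign κ (Fin q) τ = -tupleSign κ (Fin q) σ ∧
      ∀ ρ, (hammingGraph n q).Adj x (permVertex e ρ) ↔ ρ = σ ∨ ρ = τ := by
  have hadj : ∀ ρ, (hammingGraph n q).Adj x (permVertex e ρ) ↔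
      ∑ k, hammingDist (blockEquiv e x k) ⇑(ρ k) = 1 := fun ρ => by
    rw [← hammingDist_permVertex]
    rfl
  obtain ⟨k, i, j, hij, hpair⟩ := exists_swap_of_sum_hammingDist_eq_one ((hadj σ).1 h)
  exact ⟨_, tupleSign_mul_mulSingle_swap σ k hij, fun ρ => (hadj ρ).trans (hpair ρ)⟩

/-- For every `q ≥ 3` and `r ≥ 1` there is a spherical bitrade in `H(qr,q)`
of volume `(q!)^r / 2`. -/
theorem statement11 (q r : ℕ) (hq : 3 ≤ q) (hr : 1 ≤ r) :
    ∃ S0 S1 : Set (Fin (q * r) → Fin q),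
      IsSphericalBitrade (hammingGraph (q * r) q) S0 S1 ∧
        2 * S0.ncard = (Nat.factorial q) ^ r := by
  have : Nontrivial (Fin q) := Fin.nontrivial_iff_two_le.2 (by omega)
  have : Nonempty (Fin r) := ⟨⟨0, hr⟩⟩
  let e : Fin q × Fin r ≃ Fin (q * r) := finProdFinEquiv
  refine ⟨permVertex e '' {σ | tupleSign _ _ σ = 1}, permVertex e '' {σ | tupleSign _ _ σ = -1},
    isSphericalBitrade_image_of_pairing _ (permVertex_injective e) tupleSign_surjective
      (exists_pairing_of_adj_permVertex e), ?_⟩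
  have hcard := MonoidHom.two_mul_card_ker (tupleSign_surjective (κ := Fin r) (α := Fin q))
  rw [Nat.card_fun, Nat.card_perm, Nat.card_fin, Nat.card_fin] at hcard
  rw [Set.ncard_image_of_injective _ (permVertex_injective e), ← Nat.card_coe_set_eq]
  exact hcard
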